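/- Let U_BB(r,θ,ν,γ) be a BB matrix on ℓ²(ℤ) and let V(γ) be the diagonal unitary V(γ)|k⟩ = e^{iζ_k}|k⟩ with ζ₀=0, ζ_k = −Σ_{j=0}^{k−1} γ_j for k ≥ 1, and ζ_{−k} = Σ_{j=−1}^{−k} γ_j for k ≥ 1. Then V(γ)^{−1} U_BB(r,θ,ν,γ) V(γ) = U_BB(r,θ,ν,0); in particular the phases γ can be gauged away without changing the spectrum. -/

import Mathlib

open Complex

noncomputable section

/-- `ℓ²(ℤ)`. -/
abbrev HZ := lp (fun _ : ℤ => ℂ) 2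

/-- The canonical basis vector `|k⟩`. -/
def δZ (k : ℤ) : HZ := lp.single 2 k 1

/-- The scattering matrix
`S_k = e^{-iθ_k} [[r_k e^{-iν_k}, i t_k e^{iγ_k}], [i t_k e^{-iγ_k}, r_k e^{iν_k}]]`. -/
def Smat (r t θ ν γ : ℤ → ℝ) (k : ℤ) : Matrix (Fin 2) (Fin 2) ℂ :=
  Complex.exp (-Complex.I * θ k) •
    !![(r k : ℂ) * Complex.exp (-Complex.I * ν k),
       Complex.I * t k * Complex.exp (Complex.I * γ k);
       Complex.I * t k * Complex.exp (-Complex.I * γ k),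
       (r k : ℂ) * Complex.exp (Complex.I * ν k)]

/-- `De = Σ_k P_{[2k,2k+1]} S_{2k} P_{[2k,2k+1]}`, characterized by its action on the
canonical basis. -/
def IsDe (r t θ ν γ : ℤ → ℝ) (De : HZ →L[ℂ] HZ) : Prop :=
  ∀ k : ℤ,
    De (δZ (2 * k)) =
      Smat r t θ ν γ (2 * k) 0 0 • δZ (2 * k) + Smat r t θ ν γ (2 * k) 1 0 • δZ (2 * k + 1) ∧
    De (δZ (2 * k + 1)) =
      Smat r t θ ν γ (2 * k) 0 1 • δZ (2 * k) + Smat r t θ ν γ (2 * k) 1 1 • δZ (2 * k + 1)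

/-- `Do = Σ_k P_{[2k+1,2k+2]} S_{2k+1} P_{[2k+1,2k+2]}`, characterized by its action on
the canonical basis. -/
def IsDo (r t θ ν γ : ℤ → ℝ) (Do : HZ →L[ℂ] HZ) : Prop :=
  ∀ k : ℤ,
    Do (δZ (2 * k + 1)) =
      Smat r t θ ν γ (2 * k + 1) 0 0 • δZ (2 * k + 1) +
        Smat r t θ ν γ (2 * k + 1) 1 0 • δZ (2 * k + 2) ∧
    Do (δZ (2 * k + 2)) =
      Smat r t θ ν γ (2 * k + 1) 0 1 • δZ (2 * k + 1) +
        Smat r t θ ν γ (2 * k + 1) 1 1 • δZ (2 * k + 2)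

/-- The gauge phases `ζ_0 = 0`, `ζ_k = -Σ_{j=0}^{k-1} γ_j` (k ≥ 1),
`ζ_{-k} = Σ_{j=-1}^{-k} γ_j` (k ≥ 1). -/
def zeta (γ : ℤ → ℝ) (k : ℤ) : ℝ :=
  if 0 ≤ k then -(∑ j ∈ Finset.range k.toNat, γ j)
  else ∑ j ∈ Finset.range (-k).toNat, γ (-(j + 1 : ℤ))

/-! The phases satisfy `ζ_{k+1} = ζ_k - γ_k` for every `k ∈ ℤ`. Conjugating the block `S_k`,
which acts on `span {|k⟩, |k+1⟩}`, by `diag (e^{iζ_k}, e^{iζ_{k+1}})` multiplies its off-diagonal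
entries by `e^{∓iγ_k}` and so removes the phase `γ_k`. Hence `V⁻¹ D_e V` and `V⁻¹ D_o V` are
separately the operators with `γ = 0`, and `V⁻¹ D_o D_e V = (V⁻¹ D_o V)(V⁻¹ D_e V)`; conjugation by
the invertible `V` preserves the spectrum. -/

lemma zeta_succ (γ : ℤ → ℝ) (k : ℤ) : zeta γ (k + 1) = zeta γ k - γ k := by
  unfold zeta
  rcases lt_trichotomy k (-1) with h | rfl | h
  · rw [if_neg (by omega), if_neg (by omega), show (-k).toNat = (-(k + 1)).toNat + 1 by omega,
      Finset.sum_range_succ, show -(((-(k + 1)).toNat : ℤ) + 1) = k by omega]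
    ring
  · norm_num
  · rw [if_pos (by omega), if_pos (by omega), show (k + 1).toNat = k.toNat + 1 by omega,
      Finset.sum_range_succ, show (k.toNat : ℤ) = k by omega]
    ring

lemma clm_ext_δZ {L R : HZ →L[ℂ] HZ} (h : ∀ k, L (δZ k) = R (δZ k)) : L = R := by
  refine ContinuousLinearMap.ext fun x => ?_
  have hx := lp.hasSum_single ENNReal.ofNat_ne_top x
  have hsingle (i : ℤ) : lp.single (E := fun _ : ℤ => ℂ) 2 i (x i) = x i • δZ i := by
    rw [δZ, ← lp.single_smul, smul_eq_mul, mul_one]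
  refine (hx.mapL L).unique ((hx.mapL R).congr_fun fun i => ?_)
  simp only [hsingle, map_smul, h]

def ActsOnPairAs (D : HZ →L[ℂ] HZ) (k : ℤ) (S : Matrix (Fin 2) (Fin 2) ℂ) : Prop :=
  D (δZ k) = S 0 0 • δZ k + S 1 0 • δZ (k + 1) ∧
  D (δZ (k + 1)) = S 0 1 • δZ k + S 1 1 • δZ (k + 1)

lemma isDo_iff {r t θ ν γ : ℤ → ℝ} {D : HZ →L[ℂ] HZ} :
    IsDo r t θ ν γ D ↔ ∀ k, ActsOnPairAs D (2 * k + 1) (Smat r t θ ν γ (2 * k + 1)) := by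
  simp only [IsDo, ActsOnPairAs, add_assoc, show (1 + 1 : ℤ) = 2 by norm_num]

def pairDiag (a : ℤ → ℂ) (k : ℤ) : Matrix (Fin 2) (Fin 2) ℂ :=
  Matrix.diagonal ![a k, a (k + 1)]

lemma ActsOnPairAs.diag_conj {D V W : HZ →L[ℂ] HZ} {k : ℤ} {S : Matrix (Fin 2) (Fin 2) ℂ}
    {a b : ℤ → ℂ} (hV : ∀ n, V (δZ n) = a n • δZ n) (hW : ∀ n, W (δZ n) = b n • δZ n)
    (hD : ActsOnPairAs D k S) :
    ActsOnPairAs (W ∘L D ∘L V) k (pairDiag b k * S * pairDiag a k) := by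
  simp only [ActsOnPairAs, pairDiag, ContinuousLinearMap.comp_apply, hV, map_smul, hD.1, hD.2,
    map_add, hW, smul_add, smul_smul, Matrix.diagonal_mul, Matrix.mul_diagonal,
    Matrix.cons_val_zero, Matrix.cons_val_one]
  constructor <;> module

lemma diag_comp_diag_eq_one {V W : HZ →L[ℂ] HZ} {a b : ℤ → ℂ}
    (hV : ∀ n, V (δZ n) = a n • δZ n) (hW : ∀ n, W (δZ n) = b n • δZ n)
    (hab : ∀ n, a n * b n = 1) : V ∘L W = 1 :=
  clm_ext_δZ fun n => by simp [hW, hV, smul_smul, mul_comm (b n), hab]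

lemma eq_of_actsOnPairAs {A B : HZ →L[ℂ] HZ} {m : ℤ → ℤ} {S : ℤ → Matrix (Fin 2) (Fin 2) ℂ}
    (hm : ∀ n, ∃ k, n = m k ∨ n = m k + 1)
    (hA : ∀ k, ActsOnPairAs A (m k) (S k)) (hB : ∀ k, ActsOnPairAs B (m k) (S k)) : A = B :=
  clm_ext_δZ fun n => by
    obtain ⟨k, rfl | rfl⟩ := hm n
    · rw [(hA k).1, (hB k).1]
    · rw [(hA k).2, (hB k).2]

lemma Smat_gauge (r t θ ν γ : ℤ → ℝ) (k : ℤ) :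
    pairDiag (fun n => cexp (-I * zeta γ n)) k * Smat r t θ ν γ k *
      pairDiag (fun n => cexp (I * zeta γ n)) k = Smat r t θ ν (fun _ => 0) k := by
  ext i j
  fin_cases i <;> fin_cases j <;>
    simp [pairDiag, Smat, Matrix.diagonal_mul, Matrix.mul_diagonal, zeta_succ, mul_sub,
      Complex.exp_sub, Complex.exp_neg, Complex.exp_add] <;>
    field_simp

lemma gauge_conj_eq {r t θ ν γ : ℤ → ℝ} {D D0 V W : HZ →L[ℂ] HZ} {m : ℤ → ℤ}
    (hm : ∀ n, ∃ k, n = m k ∨ n = m k + 1)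
    (hD : ∀ k, ActsOnPairAs D (m k) (Smat r t θ ν γ (m k)))
    (hD0 : ∀ k, ActsOnPairAs D0 (m k) (Smat r t θ ν (fun _ => 0) (m k)))
    (hV : ∀ n, V (δZ n) = cexp (I * zeta γ n) • δZ n)
    (hW : ∀ n, W (δZ n) = cexp (-I * zeta γ n) • δZ n) :
    W ∘L D ∘L V = D0 :=
  eq_of_actsOnPairAs hm (fun k => Smat_gauge r t θ ν γ (m k) ▸ (hD k).diag_conj hV hW) hD0

theorem bb_gauge_away_general (r t θ ν γ : ℤ → ℝ)
    (De Do De0 Do0 Vg Vginv : HZ →L[ℂ] HZ)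
    (hDe : IsDe r t θ ν γ De) (hDo : IsDo r t θ ν γ Do)
    (hDe0 : IsDe r t θ ν (fun _ => 0) De0) (hDo0 : IsDo r t θ ν (fun _ => 0) Do0)
    (hV : ∀ k, Vg (δZ k) = Complex.exp (Complex.I * zeta γ k) • δZ k)
    (hVinv : ∀ k, Vginv (δZ k) = Complex.exp (-Complex.I * zeta γ k) • δZ k) :
    (∀ x : HZ, Vginv (Do (De (Vg x))) = Do0 (De0 x)) ∧
    spectrum ℂ (Do.comp De) = spectrum ℂ (Do0.comp De0) := by
  let u : (HZ →L[ℂ] HZ)ˣ :=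
    { val := Vg, inv := Vginv
      val_inv := diag_comp_diag_eq_one hV hVinv fun n => by rw [← Complex.exp_add]; simp
      inv_val := diag_comp_diag_eq_one hVinv hV fun n => by rw [← Complex.exp_add]; simp }
  have hE : ↑u⁻¹ * De * ↑u = De0 :=
    gauge_conj_eq (m := fun k => 2 * k) (fun n => ⟨n / 2, by omega⟩) hDe hDe0 hV hVinv
  have hO : ↑u⁻¹ * Do * ↑u = Do0 :=
    gauge_conj_eq (m := fun k => 2 * k + 1) (fun n => ⟨(n - 1) / 2, by omega⟩)
      (isDo_iff.mp hDo) (isDo_iff.mp hDo0) hV hVinv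
  have hconj : ↑u⁻¹ * (Do * De) * ↑u = Do0 * De0 := by
    simp [← hE, ← hO, mul_assoc]
  refine ⟨fun x => congr($hconj x), ?_⟩
  change spectrum ℂ (Do * De) = spectrum ℂ (Do0 * De0)
  rw [← hconj, spectrum.units_conjugate']

/-- Gauging away the phases `γ` of a BB matrix:
`V(γ)⁻¹ U_BB(r,θ,ν,γ) V(γ) = U_BB(r,θ,ν,0)`; in particular the spectrum is unchanged. -/
theorem bb_gauge_away (r t θ ν γ : ℤ → ℝ)
    (hr : ∀ k, r k ∈ Set.Icc (0:ℝ) 1) (ht : ∀ k, t k ∈ Set.Icc (0:ℝ) 1)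
    (hrt : ∀ k, r k ^ 2 + t k ^ 2 = 1)
    (De Do De0 Do0 Vg Vginv : HZ →L[ℂ] HZ)
    (hDe : IsDe r t θ ν γ De) (hDo : IsDo r t θ ν γ Do)
    (hDe0 : IsDe r t θ ν (fun _ => 0) De0) (hDo0 : IsDo r t θ ν (fun _ => 0) Do0)
    (hV : ∀ k, Vg (δZ k) = Complex.exp (Complex.I * zeta γ k) • δZ k)
    (hVinv : ∀ k, Vginv (δZ k) = Complex.exp (-Complex.I * zeta γ k) • δZ k) :
    (∀ x : HZ, Vginv (Do (De (Vg x))) = Do0 (De0 x)) ∧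
    spectrum ℂ (Do.comp De) = spectrum ℂ (Do0.comp De0) :=
  bb_gauge_away_general r t θ ν γ De Do De0 Do0 Vg Vginv hDe hDo hDe0 hDo0 hV hVinv
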